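/- For every irreducible ℂ[G]-module V, the complex dimension of the subspace e_{(n)}·V is at most 1; equivalently, the Gelfand–Graev representation ℂ[G]e_{(n)} ≅ Ind_U^G(ψ_{(n)}) is multiplicity free. -/

import Mathlib

open Matrix MonoidAlgebra

/-- `g` is upper triangular with all diagonal entries `1` (unipotent upper triangular). -/
def IsUU {F : Type} [Field F] {n : ℕ} (g : Matrix (Fin n) (Fin n) F) : Prop :=
  (∀ i j : Fin n, j < i → g i j = 0) ∧ (∀ i : Fin n, g i i = 1)

instance {F : Type} [Field F] [DecidableEq F] {n : ℕ} (g : Matrix (Fin n) (Fin n) F) :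
    Decidable (IsUU g) :=
  @decidable_of_iff _ ((∀ i j : Fin n, j < i → g i j = 0) ∧ (∀ i : Fin n, g i i = 1)) Iff.rfl
    (@instDecidableAnd _ _ (@Fintype.decidableForallFintype _ _ (fun _ => inferInstance) _)
      inferInstance)

/-- The set `B_μ = {μ₁, μ₁+μ₂, …, μ₁+⋯+μ_ℓ}` of partial sums of the composition `μ`. -/
def Bset (μ : List ℕ) : Finset ℕ :=
  (Finset.range μ.length).image fun k => (μ.take (k + 1)).sum

/-- The linear character `ψ_μ` of `U`, as a function on all of `GL n F`:
`ψ_μ(u) = ψ(Σ u_{i,i+1})`, where the sum runs over the superdiagonal positions whose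
(1-based) row index `i` satisfies `i ∉ B_μ`. -/
noncomputable def psiMu {F : Type} [Field F] [Fintype F] [DecidableEq F]
    (ψ : AddChar F ℂ) (n : ℕ) (μ : List ℕ) (g : GL (Fin n) F) : ℂ :=
  ψ (∑ p : Fin n × Fin n,
      if (p.1 : ℕ) + 1 = (p.2 : ℕ) ∧ (p.1 : ℕ) + 1 ∉ Bset μ
      then (g : Matrix (Fin n) (Fin n) F) p.1 p.2 else 0)

/-- The subgroup `U` of unipotent upper triangular matrices, as a finset of `GL n F`. -/
noncomputable def Uset (F : Type) [Field F] [Fintype F] [DecidableEq F] (n : ℕ) :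
    Finset (GL (Fin n) F) :=
  Finset.univ.filter fun g => IsUU (g : Matrix (Fin n) (Fin n) F)

/-- The idempotent `e_μ = (1/|U|) Σ_{u ∈ U} ψ_μ(u⁻¹) u` of the group algebra `ℂ[GL n F]`. -/
noncomputable def eMu {F : Type} [Field F] [Fintype F] [DecidableEq F]
    (ψ : AddChar F ℂ) (n : ℕ) (μ : List ℕ) : MonoidAlgebra ℂ (GL (Fin n) F) :=
  ((Uset F n).card : ℂ)⁻¹ • ∑ u ∈ Uset F n, MonoidAlgebra.single u (psiMu ψ n μ u⁻¹)

/-- A matrix is monomial when it has exactly one nonzero entry in each row and column. -/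
def IsMonomialMat {F : Type} [Field F] {n : ℕ} (g : Matrix (Fin n) (Fin n) F) : Prop :=
  (∀ i : Fin n, ∃! j : Fin n, g i j ≠ 0) ∧ (∀ j : Fin n, ∃! i : Fin n, g i j ≠ 0)

/-- The set `N_μ` of monomial matrices `v` such that whenever `u, vuv⁻¹ ∈ U` one has
`ψ_μ(u) = ψ_μ(vuv⁻¹)`. -/
noncomputable def Nmu {F : Type} [Field F] [Fintype F] [DecidableEq F]
    (ψ : AddChar F ℂ) (n : ℕ) (μ : List ℕ) : Set (GL (Fin n) F) :=
  {v | IsMonomialMat (v : Matrix (Fin n) (Fin n) F) ∧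
    ∀ u : GL (Fin n) F, IsUU (u : Matrix (Fin n) (Fin n) F) →
      IsUU ((v * u * v⁻¹ : GL (Fin n) F) : Matrix (Fin n) (Fin n) F) →
      psiMu ψ n μ u = psiMu ψ n μ (v * u * v⁻¹)}

/-- The set `M_μ` of `ℓ×ℓ` matrices of monic polynomials with nonzero constant term whose
degree row sums and degree column sums are both equal to `μ`. -/
def Mmu (F : Type) [Field F] (μ : List ℕ) :
    Set (Matrix (Fin μ.length) (Fin μ.length) (Polynomial F)) :=
  {a | (∀ i j, (a i j).Monic ∧ Polynomial.eval 0 (a i j) ≠ 0) ∧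
       (∀ i, (∑ j, (a i j).natDegree) = μ.get i) ∧
       (∀ j, (∑ i, (a i j).natDegree) = μ.get j)}

/-- The unipotent Hecke algebra `H_μ = e_μ ℂ[G] e_μ` as a subspace of the group algebra. -/
noncomputable def Hsub {F : Type} [Field F] [Fintype F] [DecidableEq F] {n : ℕ}
    (e : MonoidAlgebra ℂ (GL (Fin n) F)) : Submodule ℂ (MonoidAlgebra ℂ (GL (Fin n) F)) :=
  LinearMap.range ((LinearMap.mulLeft ℂ e).comp (LinearMap.mulRight ℂ e))
set_option linter.unusedSectionVars false

namespace GG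

variable {F : Type} [Field F] [Fintype F] [DecidableEq F] {n : ℕ}

/-- superdiagonal sum -/
def sd (M : Matrix (Fin n) (Fin n) F) : F :=
  ∑ p : Fin n × Fin n, if (p.1 : ℕ) + 1 = (p.2 : ℕ) then M p.1 p.2 else 0

lemma Bset_single : Bset [n] = {n} := by
  simp [Bset, Finset.eq_singleton_iff_unique_mem]

lemma psiMu_eq (ψ : AddChar F ℂ) (g : GL (Fin n) F) :
    psiMu ψ n [n] g = ψ (sd g.val) := by
  unfold psiMu sd
  congr 1
  refine Finset.sum_congr rfl fun p _ => ?_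
  have h2 := p.2.isLt
  by_cases h : (p.1 : ℕ) + 1 = (p.2 : ℕ)
  · have hb : (p.1 : ℕ) + 1 ∉ Bset [n] := by
      rw [Bset_single, Finset.mem_singleton]; omega
    rw [if_pos ⟨h, hb⟩, if_pos h]
  · rw [if_neg (fun hc => h hc.1), if_neg h]

lemma sd_one : sd (1 : Matrix (Fin n) (Fin n) F) = 0 := by
  unfold sd
  refine Finset.sum_eq_zero fun p _ => ?_
  by_cases h : (p.1 : ℕ) + 1 = (p.2 : ℕ)
  · have : p.1 ≠ p.2 := fun hh => by rw [hh] at h; omega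
    rw [if_pos h, Matrix.one_apply_ne this]
  · rw [if_neg h]

lemma sd_mul {M N : Matrix (Fin n) (Fin n) F} (hM : IsUU M) (hN : IsUU N) :
    sd (M * N) = sd M + sd N := by
  unfold sd
  rw [← Finset.sum_add_distrib]
  refine Finset.sum_congr rfl fun p _ => ?_
  by_cases h : (p.1 : ℕ) + 1 = (p.2 : ℕ)
  · rw [if_pos h, if_pos h, if_pos h]
    have hne : p.1 ≠ p.2 := fun hh => by rw [hh] at h; omega
    have key : ∀ k : Fin n, k ≠ p.1 → k ≠ p.2 → M p.1 k * N k p.2 = 0 := by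
      intro k h1 h2
      rcases lt_or_gt_of_ne h1 with hk | hk
      · rw [hM.1 p.1 k hk, zero_mul]
      · have hv : (k : ℕ) ≠ (p.2 : ℕ) := fun hh => h2 (Fin.ext hh)
        have hk' : (p.1 : ℕ) < (k : ℕ) := hk
        have : p.2 < k := by rw [Fin.lt_def]; omega
        rw [hN.1 k p.2 this, mul_zero]
    have hsub : ({p.1, p.2} : Finset (Fin n)) ⊆ Finset.univ := Finset.subset_univ _
    have hsum : ∑ k ∈ ({p.1, p.2} : Finset (Fin n)), M p.1 k * N k p.2
        = ∑ k : Fin n, M p.1 k * N k p.2 :=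
      Finset.sum_subset hsub (fun k _ hk => by
        simp only [Finset.mem_insert, Finset.mem_singleton, not_or] at hk
        exact key k hk.1 hk.2)
    rw [Matrix.mul_apply, ← hsum, Finset.sum_pair hne, hM.2 p.1, hN.2 p.2, one_mul, mul_one,
      add_comm]
  · rw [if_neg h, if_neg h, if_neg h, add_zero]

lemma isUU_one : IsUU (1 : Matrix (Fin n) (Fin n) F) :=
  ⟨fun i j hij => Matrix.one_apply_ne (fun h => by subst h; exact lt_irrefl _ hij),
   fun i => Matrix.one_apply_eq i⟩

lemma isUU_mul {M N : Matrix (Fin n) (Fin n) F} (hM : IsUU M) (hN : IsUU N) :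
    IsUU (M * N) := by
  constructor
  · intro i j hij
    rw [Matrix.mul_apply]
    refine Finset.sum_eq_zero fun k _ => ?_
    rcases le_or_gt k j with hk | hk
    · rw [hM.1 i k (lt_of_le_of_lt hk hij), zero_mul]
    · rw [hN.1 k j hk, mul_zero]
  · intro i
    rw [Matrix.mul_apply]
    have key : ∀ k : Fin n, k ≠ i → M i k * N k i = 0 := by
      intro k hk
      rcases lt_or_gt_of_ne hk with h | h
      · rw [hM.1 i k h, zero_mul]
      · rw [hN.1 k i h, mul_zero]
    rw [Finset.sum_eq_single i (fun k _ hk => key k hk) (fun h => (h (Finset.mem_univ i)).elim)]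
    rw [hM.2, hN.2, one_mul]

lemma isUU_inv (g : GL (Fin n) F) (h : IsUU (g.val)) : IsUU ((g⁻¹).val) := by
  set B := (g⁻¹).val with hB
  have hBg : B * g.val = 1 := by
    rw [hB, ← Units.val_mul, inv_mul_cancel g, Units.val_one]
  have upper : ∀ (jn : ℕ) (j : Fin n), (j : ℕ) = jn → ∀ i, j < i → B i j = 0 := by
    intro jn
    induction jn using Nat.strong_induction_on with
    | _ jn IH =>
      intro j hj i hij
      have h1 : (1 : Matrix (Fin n) (Fin n) F) i j = 0 :=
        Matrix.one_apply_ne (fun hh => by subst hh; exact lt_irrefl _ hij)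
      rw [← hBg, Matrix.mul_apply] at h1
      have key : ∀ k : Fin n, k ≠ j → B i k * g.val k j = 0 := by
        intro k hk
        rcases lt_or_gt_of_ne hk with hlt | hgt
        · rcases lt_or_ge k i with hki | hki
          · rw [IH (k : ℕ) (by omega) k rfl i hki, zero_mul]
          · rw [h.1 k j (lt_of_lt_of_le hij hki), mul_zero]
        · rw [h.1 k j hgt, mul_zero]
      rw [Finset.sum_eq_single j (fun k _ hk => key k hk)
        (fun hh => (hh (Finset.mem_univ j)).elim)] at h1
      rw [h.2 j, mul_one] at h1
      exact h1
  refine ⟨fun i j hij => upper (j : ℕ) j rfl i hij, fun i => ?_⟩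
  have h1 : (1 : Matrix (Fin n) (Fin n) F) i i = 1 := Matrix.one_apply_eq i
  rw [← hBg, Matrix.mul_apply] at h1
  have key : ∀ k : Fin n, k ≠ i → B i k * g.val k i = 0 := by
    intro k hk
    rcases lt_or_gt_of_ne hk with hlt | hgt
    · rw [upper (k : ℕ) k rfl i hlt, zero_mul]
    · rw [h.1 k i hgt, mul_zero]
  rw [Finset.sum_eq_single i (fun k _ hk => key k hk)
    (fun hh => (hh (Finset.mem_univ i)).elim)] at h1
  rw [h.2 i, mul_one] at h1
  exact h1

end GG
namespace GG

variable {F : Type} [Field F] [Fintype F] [DecidableEq F] {n : ℕ}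

lemma mem_Uset {g : GL (Fin n) F} : g ∈ Uset F n ↔ IsUU g.val := by
  unfold Uset
  rw [Finset.mem_filter]
  exact ⟨fun h => h.2, fun h => ⟨Finset.mem_univ g, h⟩⟩

lemma one_mem_Uset : (1 : GL (Fin n) F) ∈ Uset F n := by
  rw [mem_Uset]; exact_mod_cast isUU_one

lemma mul_mem_Uset {u v : GL (Fin n) F} (hu : u ∈ Uset F n) (hv : v ∈ Uset F n) :
    u * v ∈ Uset F n := by
  rw [mem_Uset] at *
  have : (u * v).val = u.val * v.val := rfl
  rw [this]; exact isUU_mul hu hv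

lemma inv_mem_Uset {u : GL (Fin n) F} (hu : u ∈ Uset F n) : u⁻¹ ∈ Uset F n := by
  rw [mem_Uset] at *; exact isUU_inv u hu

variable (ψ : AddChar F ℂ)

lemma psi_mul {u v : GL (Fin n) F} (hu : u ∈ Uset F n) (hv : v ∈ Uset F n) :
    psiMu ψ n [n] (u * v) = psiMu ψ n [n] u * psiMu ψ n [n] v := by
  rw [mem_Uset] at hu hv
  rw [psiMu_eq, psiMu_eq, psiMu_eq]
  have : (u * v).val = u.val * v.val := rfl
  rw [this, sd_mul hu hv, AddChar.map_add_eq_mul]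

lemma psi_one : psiMu ψ n [n] (1 : GL (Fin n) F) = 1 := by
  rw [psiMu_eq]
  have : (1 : GL (Fin n) F).val = (1 : Matrix (Fin n) (Fin n) F) := rfl
  rw [this, sd_one, AddChar.map_zero_eq_one]

lemma psi_ne_zero (g : GL (Fin n) F) : psiMu ψ n [n] g ≠ 0 := by
  rw [psiMu_eq]
  intro h
  have : ψ (sd g.val) * ψ (-(sd g.val)) = 1 := by
    rw [← AddChar.map_add_eq_mul, add_neg_cancel, AddChar.map_zero_eq_one]
  rw [h, zero_mul] at this
  exact zero_ne_one this

lemma psi_inv_mul {u : GL (Fin n) F} (hu : u ∈ Uset F n) :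
    psiMu ψ n [n] u⁻¹ * psiMu ψ n [n] u = 1 := by
  rw [← psi_mul ψ (inv_mem_Uset hu) hu, inv_mul_cancel, psi_one]

lemma card_Uset_ne_zero : ((Uset F n).card : ℂ) ≠ 0 := by
  have : (Uset F n).Nonempty := ⟨1, one_mem_Uset⟩
  exact_mod_cast Nat.cast_ne_zero.mpr (Finset.card_pos.mpr this).ne'

lemma e_mul_single {u : GL (Fin n) F} (hu : u ∈ Uset F n) :
    eMu ψ n [n] * MonoidAlgebra.single u 1 = psiMu ψ n [n] u • eMu ψ n [n] := by
  unfold eMu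
  rw [smul_mul_assoc, Finset.sum_mul, smul_comm]
  congr 1
  rw [Finset.smul_sum]
  refine Finset.sum_nbij' (fun v => v * u) (fun w => w * u⁻¹) ?_ ?_ ?_ ?_ ?_
  · intro v hv; exact mul_mem_Uset hv hu
  · intro w hw; exact mul_mem_Uset hw (inv_mem_Uset hu)
  · intro v _; rw [mul_assoc, mul_inv_cancel, mul_one]
  · intro w _; rw [mul_assoc, inv_mul_cancel, mul_one]
  · intro v hv
    rw [MonoidAlgebra.single_mul_single, mul_one]
    have h2 : v⁻¹ = u * (v * u)⁻¹ := by group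
    rw [h2, psi_mul ψ hu (inv_mem_Uset (mul_mem_Uset hv hu)), MonoidAlgebra.smul_single, smul_eq_mul]

lemma single_mul_e {u : GL (Fin n) F} (hu : u ∈ Uset F n) :
    MonoidAlgebra.single u 1 * eMu ψ n [n] = psiMu ψ n [n] u • eMu ψ n [n] := by
  unfold eMu
  rw [mul_smul_comm, Finset.mul_sum, smul_comm]
  congr 1
  rw [Finset.smul_sum]
  refine Finset.sum_nbij' (fun v => u * v) (fun w => u⁻¹ * w) ?_ ?_ ?_ ?_ ?_
  · intro v hv; exact mul_mem_Uset hu hv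
  · intro w hw; exact mul_mem_Uset (inv_mem_Uset hu) hw
  · intro v _; rw [← mul_assoc, inv_mul_cancel, one_mul]
  · intro w _; rw [← mul_assoc, mul_inv_cancel, one_mul]
  · intro v hv
    rw [MonoidAlgebra.single_mul_single, one_mul]
    have h2 : v⁻¹ = (u * v)⁻¹ * u := by group
    rw [h2, psi_mul ψ (inv_mem_Uset (mul_mem_Uset hu hv)) hu, mul_comm,
      MonoidAlgebra.smul_single, smul_eq_mul]

lemma e_idem : eMu ψ n [n] * eMu ψ n [n] = eMu ψ n [n] := by
  nth_rewrite 1 [eMu]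
  rw [smul_mul_assoc, Finset.sum_mul]
  have : ∀ u ∈ Uset F n,
      MonoidAlgebra.single u (psiMu ψ n [n] u⁻¹) * eMu ψ n [n] = eMu ψ n [n] := by
    intro u hu
    have h1 : MonoidAlgebra.single u (psiMu ψ n [n] u⁻¹)
        = psiMu ψ n [n] u⁻¹ • MonoidAlgebra.single u (1 : ℂ) := by
      rw [MonoidAlgebra.smul_single, smul_eq_mul, mul_one]
    rw [h1, smul_mul_assoc, single_mul_e ψ hu, ← smul_assoc, smul_eq_mul,
      psi_inv_mul ψ hu, one_smul]
  rw [Finset.sum_congr rfl this, Finset.sum_const, ← Nat.cast_smul_eq_nsmul ℂ, smul_smul,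
    inv_mul_cancel₀ card_Uset_ne_zero, one_smul]

end GG
namespace GG

variable {F : Type} [Field F] [Fintype F] [DecidableEq F] {n : ℕ}

/-- the anti-automorphism `M ↦ J Mᵀ J` -/
def sigM (M : Matrix (Fin n) (Fin n) F) : Matrix (Fin n) (Fin n) F :=
  Matrix.of fun i j => M j.rev i.rev

lemma sigM_apply (M : Matrix (Fin n) (Fin n) F) (i j : Fin n) :
    sigM M i j = M j.rev i.rev := rfl

/-- the reversal equivalence on pairs -/
def revE : (Fin n × Fin n) ≃ (Fin n × Fin n) where
  toFun p := (p.2.rev, p.1.rev)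
  invFun p := (p.2.rev, p.1.rev)
  left_inv p := by simp [Fin.rev_rev]
  right_inv p := by simp [Fin.rev_rev]

lemma sigM_mul (M N : Matrix (Fin n) (Fin n) F) :
    sigM (M * N) = sigM N * sigM M := by
  ext i j
  rw [sigM_apply, Matrix.mul_apply, Matrix.mul_apply]
  rw [← Equiv.sum_comp (Fin.revPerm) (fun k => sigM N i k * sigM M k j)]
  refine Finset.sum_congr rfl fun k _ => ?_
  rw [sigM_apply, sigM_apply]
  simp only [Fin.revPerm_apply, Fin.rev_rev]
  rw [mul_comm]

lemma sigM_one : sigM (1 : Matrix (Fin n) (Fin n) F) = 1 := by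
  ext i j
  rw [sigM_apply]
  by_cases h : i = j
  · subst h; rw [Matrix.one_apply_eq, Matrix.one_apply_eq]
  · rw [Matrix.one_apply_ne (fun hh => h (Fin.rev_injective hh).symm),
      Matrix.one_apply_ne h]

lemma sigM_sigM (M : Matrix (Fin n) (Fin n) F) : sigM (sigM M) = M := by
  ext i j; rw [sigM_apply, sigM_apply, Fin.rev_rev, Fin.rev_rev]

/-- σ on the group -/
def sigG (g : GL (Fin n) F) : GL (Fin n) F where
  val := sigM g.val
  inv := sigM g.inv
  val_inv := by rw [← sigM_mul, g.inv_val, sigM_one]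
  inv_val := by rw [← sigM_mul, g.val_inv, sigM_one]

lemma sigG_val (g : GL (Fin n) F) : (sigG g).val = sigM g.val := rfl

lemma sigG_mul (g h : GL (Fin n) F) : sigG (g * h) = sigG h * sigG g :=
  Units.ext (sigM_mul g.val h.val)

lemma sigG_sigG (g : GL (Fin n) F) : sigG (sigG g) = g :=
  Units.ext (sigM_sigM g.val)

lemma sigG_inv (g : GL (Fin n) F) : sigG g⁻¹ = (sigG g)⁻¹ := rfl

lemma isUU_sigM {M : Matrix (Fin n) (Fin n) F} (h : IsUU M) : IsUU (sigM M) := by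
  constructor
  · intro i j hij
    rw [sigM_apply]
    refine h.1 j.rev i.rev ?_
    rw [Fin.lt_def, Fin.val_rev, Fin.val_rev]
    have h1 := i.isLt; have h2 := j.isLt
    have := (Fin.lt_def).mp hij
    omega
  · intro i; rw [sigM_apply]; exact h.2 i.rev

lemma sd_sigM (M : Matrix (Fin n) (Fin n) F) : sd (sigM M) = sd M := by
  unfold sd
  rw [← Equiv.sum_comp (revE) (fun p : Fin n × Fin n =>
    if (p.1 : ℕ) + 1 = (p.2 : ℕ) then sigM M p.1 p.2 else 0)]
  refine Finset.sum_congr rfl fun p _ => ?_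
  have h1 := p.1.isLt; have h2 := p.2.isLt
  have hc : ((revE p).1 : ℕ) + 1 = ((revE p).2 : ℕ) ↔ (p.1 : ℕ) + 1 = (p.2 : ℕ) := by
    show ((p.2.rev : ℕ) + 1 = (p.1.rev : ℕ)) ↔ _
    rw [Fin.val_rev, Fin.val_rev]
    omega
  by_cases h : (p.1 : ℕ) + 1 = (p.2 : ℕ)
  · rw [if_pos (hc.mpr h), if_pos h]
    show M (p.1.rev.rev) (p.2.rev.rev) = M p.1 p.2
    rw [Fin.rev_rev, Fin.rev_rev]
  · rw [if_neg (fun hh => h (hc.mp hh)), if_neg h]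

lemma psi_sigG (ψ : AddChar F ℂ) (g : GL (Fin n) F) :
    psiMu ψ n [n] (sigG g) = psiMu ψ n [n] g := by
  rw [psiMu_eq, psiMu_eq, sigG_val, sd_sigM]

lemma sigG_mem_Uset {u : GL (Fin n) F} (hu : u ∈ Uset F n) : sigG u ∈ Uset F n := by
  rw [mem_Uset] at *; exact isUU_sigM hu

/-- σ extended to the group algebra -/
noncomputable def SigA : MonoidAlgebra ℂ (GL (Fin n) F) → MonoidAlgebra ℂ (GL (Fin n) F) :=
  MonoidAlgebra.mapDomain sigG

lemma SigA_single (g : GL (Fin n) F) (a : ℂ) :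
    SigA (MonoidAlgebra.single g a) = MonoidAlgebra.single (sigG g) a :=
  MonoidAlgebra.mapDomain_single

lemma SigA_add (x y : MonoidAlgebra ℂ (GL (Fin n) F)) : SigA (x + y) = SigA x + SigA y :=
  MonoidAlgebra.mapDomain_add _ _ _

lemma SigA_smul (c : ℂ) (x : MonoidAlgebra ℂ (GL (Fin n) F)) : SigA (c • x) = c • SigA x :=
  MonoidAlgebra.mapDomain_smul _ c x

lemma SigA_zero : SigA (0 : MonoidAlgebra ℂ (GL (Fin n) F)) = 0 :=
  MonoidAlgebra.mapDomain_zero _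

lemma SigA_mul (x y : MonoidAlgebra ℂ (GL (Fin n) F)) : SigA (x * y) = SigA y * SigA x := by
  induction x using MonoidAlgebra.induction_linear with
  | zero => rw [zero_mul, SigA_zero, mul_zero]
  | add f g hf hg => rw [add_mul, SigA_add, SigA_add, mul_add, hf, hg]
  | single g a =>
    induction y using MonoidAlgebra.induction_linear with
    | zero => rw [mul_zero, SigA_zero, zero_mul]
    | add f g' hf hg => rw [mul_add, SigA_add, SigA_add, add_mul, hf, hg]
    | single h b =>
      rw [MonoidAlgebra.single_mul_single, SigA_single, SigA_single, SigA_single,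
        MonoidAlgebra.single_mul_single, sigG_mul, mul_comm a b]

lemma SigA_e (ψ : AddChar F ℂ) : SigA (eMu ψ n [n]) = eMu ψ n [n] := by
  unfold eMu
  rw [SigA_smul]
  congr 1
  unfold SigA
  rw [show MonoidAlgebra.mapDomain sigG
      (∑ u ∈ Uset F n, MonoidAlgebra.single u (psiMu ψ n [n] u⁻¹))
      = ∑ u ∈ Uset F n, MonoidAlgebra.mapDomain sigG (MonoidAlgebra.single u (psiMu ψ n [n] u⁻¹))
      from map_sum (MonoidAlgebra.mapDomainLinearMap ℂ ℂ sigG) _ _]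
  refine Finset.sum_nbij' (fun u => sigG u) (fun u => sigG u) ?_ ?_ ?_ ?_ ?_
  · intro u hu; exact sigG_mem_Uset hu
  · intro u hu; exact sigG_mem_Uset hu
  · intro u _; exact sigG_sigG u
  · intro u _; exact sigG_sigG u
  · intro u _
    rw [MonoidAlgebra.mapDomain_single]
    congr 1
    rw [← sigG_inv, psi_sigG]

end GG
namespace GG

variable {F : Type} [Field F] [Fintype F] [DecidableEq F] {n : ℕ}

lemma isUnit_of_isUU {M : Matrix (Fin n) (Fin n) F} (h : IsUU M) : IsUnit M := by
  rw [Matrix.isUnit_iff_isUnit_det]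
  have hbt : M.BlockTriangular id := fun i j hij => h.1 i j hij
  rw [Matrix.det_of_upperTriangular hbt]
  have : ∀ i ∈ Finset.univ, M i i = 1 := fun i _ => h.2 i
  rw [Finset.prod_congr rfl this, Finset.prod_const_one]
  exact isUnit_one

/-- Invariant after processing the first `k` columns. -/
def Inv (k : ℕ) (f : Fin n → Fin n) (A : Matrix (Fin n) (Fin n) F) : Prop :=
  (∀ j : Fin n, (j : ℕ) < k → ∀ i : Fin n, (A i j ≠ 0 ↔ i = f j)) ∧
  (∀ j : Fin n, (j : ℕ) < k → ∀ j' : Fin n, j' ≠ j → A (f j) j' = 0) ∧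
  (∀ j j' : Fin n, (j : ℕ) < k → (j' : ℕ) < k → f j = f j' → j = j')

lemma inv_n_monomial {f : Fin n → Fin n} {A : Matrix (Fin n) (Fin n) F}
    (h : Inv n f A) : IsMonomialMat A := by
  have hinj : Function.Injective f := fun j j' hh => h.2.2 j j' j.isLt j'.isLt hh
  have hbij : Function.Bijective f := (Finite.injective_iff_bijective).mp hinj
  constructor
  · intro i
    obtain ⟨j, hj⟩ := hbij.2 i
    refine ⟨j, ?_, ?_⟩
    · show A i j ≠ 0
      exact (h.1 j j.isLt i).mpr hj.symm
    · intro j' hj'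
      have h2 : i = f j' := (h.1 j' j'.isLt i).mp hj'
      have h3 : f j' = f j := by rw [← h2, hj]
      exact hinj h3
  · intro j
    exact ⟨f j, (h.1 j j.isLt (f j)).mpr rfl, fun i hi => (h.1 j j.isLt i).mp hi⟩

lemma bruhat_step {k : ℕ} (hk : k < n) {f : Fin n → Fin n} {A : Matrix (Fin n) (Fin n) F}
    (hU : IsUnit A) (hInv : Inv k f A) :
    ∃ (L R : Matrix (Fin n) (Fin n) F) (f' : Fin n → Fin n),
      IsUU L ∧ IsUU R ∧ Inv (k + 1) f' (L * A * R) := by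
  classical
  set j₀ : Fin n := ⟨k, hk⟩ with hj₀
  have hj₀v : (j₀ : ℕ) = k := rfl
  -- the column j₀ is nonzero
  have hcol : ∃ i, A i j₀ ≠ 0 := by
    by_contra hc
    push_neg at hc
    have hdet : A.det = 0 := Matrix.det_eq_zero_of_column_eq_zero j₀ hc
    have := (Matrix.isUnit_iff_isUnit_det A).mp hU
    rw [hdet] at this
    exact (not_isUnit_zero this)
  set S : Finset (Fin n) := Finset.univ.filter (fun i => A i j₀ ≠ 0) with hS
  have hSne : S.Nonempty := by
    obtain ⟨i, hi⟩ := hcol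
    exact ⟨i, by rw [hS, Finset.mem_filter]; exact ⟨Finset.mem_univ i, hi⟩⟩
  set i₀ : Fin n := S.max' hSne with hi₀
  have hpiv : A i₀ j₀ ≠ 0 := (Finset.mem_filter.mp (S.max'_mem hSne)).2
  have hmax : ∀ i : Fin n, A i j₀ ≠ 0 → i ≤ i₀ := fun i hi =>
    S.le_max' i (by rw [hS, Finset.mem_filter]; exact ⟨Finset.mem_univ i, hi⟩)
  have hprow0 : ∀ j : Fin n, (j : ℕ) < k → A (f j) j₀ = 0 := by
    intro j hj
    exact hInv.2.1 j hj j₀ (fun hh => by have := congrArg Fin.val hh; omega)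
  have hnotpiv : ∀ j : Fin n, (j : ℕ) < k → f j ≠ i₀ := by
    intro j hj hh
    exact hpiv (hh ▸ hprow0 j hj)
  set piv := A i₀ j₀ with hpivdef
  -- column operations
  set R : Matrix (Fin n) (Fin n) F := Matrix.of fun i m =>
    (if i = m then (1 : F) else 0) +
      (if i = j₀ ∧ (j₀ : ℕ) < (m : ℕ) then -(A i₀ m) / piv else 0) with hR
  have hRU : IsUU R := by
    constructor
    · intro i m him
      show (if i = m then (1:F) else 0) + _ = 0
      rw [if_neg (fun hh => by rw [hh] at him; exact lt_irrefl _ him),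
        if_neg (fun hh => by
          obtain ⟨h1, h2⟩ := hh
          rw [h1] at him
          have := (Fin.lt_def).mp him
          omega), add_zero]
    · intro i
      show (if i = i then (1:F) else 0) + _ = 1
      rw [if_pos rfl, if_neg (fun hh => by obtain ⟨h1, h2⟩ := hh; rw [h1] at h2; omega),
        add_zero]
  set A1 := A * R with hA1def
  have hA1 : ∀ i m : Fin n, A1 i m = A i m +
      (if (j₀ : ℕ) < (m : ℕ) then A i j₀ * (-(A i₀ m) / piv) else 0) := by
    intro i m
    rw [hA1def, Matrix.mul_apply]
    have : ∀ x : Fin n, A i x * R x m =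
        (if x = m then A i x else 0) +
        (if x = j₀ ∧ (j₀ : ℕ) < (m : ℕ) then A i x * (-(A i₀ m) / piv) else 0) := by
      intro x
      show A i x * ((if x = m then (1:F) else 0) + _) = _
      rw [mul_add]
      congr 1
      · by_cases hx : x = m
        · rw [if_pos hx, if_pos hx, mul_one]
        · rw [if_neg hx, if_neg hx, mul_zero]
      · by_cases hx : x = j₀ ∧ (j₀ : ℕ) < (m : ℕ)
        · rw [if_pos hx, if_pos hx]
        · rw [if_neg hx, if_neg hx, mul_zero]
    rw [Finset.sum_congr rfl (fun x _ => this x), Finset.sum_add_distrib]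
    congr 1
    · rw [Finset.sum_eq_single m (fun x _ hx => if_neg hx) (fun h => (h (Finset.mem_univ m)).elim),
        if_pos rfl]
    · by_cases hm : (j₀ : ℕ) < (m : ℕ)
      · rw [if_pos hm, Finset.sum_eq_single j₀
          (fun x _ hx => if_neg (fun hh => hx hh.1))
          (fun h => (h (Finset.mem_univ j₀)).elim), if_pos ⟨rfl, hm⟩]
      · rw [if_neg hm]
        exact Finset.sum_eq_zero (fun x _ => if_neg (fun hh => hm hh.2))
  -- facts about A1
  have hA1le : ∀ i m : Fin n, (m : ℕ) ≤ (j₀ : ℕ) → A1 i m = A i m := by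
    intro i m hm
    rw [hA1 i m, if_neg (by omega), add_zero]
  have hA1row : ∀ m : Fin n, m ≠ j₀ → A1 i₀ m = 0 := by
    intro m hm
    rcases lt_or_gt_of_ne (fun hh : (m : ℕ) = (j₀ : ℕ) => hm (Fin.ext hh)) with hlt | hgt
    · rw [hA1le i₀ m (le_of_lt hlt)]
      have hmk : (m : ℕ) < k := hlt
      have := (hInv.1 m hmk i₀)
      by_contra hc
      exact hnotpiv m hmk (this.mp hc).symm
    · rw [hA1 i₀ m, if_pos hgt]
      field_simp
      rw [hpivdef]
      ring
  have hA1pivrow : ∀ j : Fin n, (j : ℕ) < k → ∀ m : Fin n, A1 (f j) m = A (f j) m := by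
    intro j hj m
    rw [hA1 (f j) m, hprow0 j hj]
    by_cases hm : (j₀ : ℕ) < (m : ℕ)
    · rw [if_pos hm, zero_mul, add_zero]
    · rw [if_neg hm, add_zero]
  have hA1colj₀ : ∀ i : Fin n, A1 i j₀ = A i j₀ := fun i => hA1le i j₀ le_rfl
  -- row operations
  set L : Matrix (Fin n) (Fin n) F := Matrix.of fun i m =>
    (if i = m then (1 : F) else 0) +
      (if m = i₀ ∧ (i : ℕ) < (i₀ : ℕ) then -(A1 i j₀) / piv else 0) with hL
  have hLU : IsUU L := by
    constructor
    · intro i m him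
      show (if i = m then (1:F) else 0) + _ = 0
      rw [if_neg (fun hh => by rw [hh] at him; exact lt_irrefl _ him),
        if_neg (fun hh => by
          obtain ⟨h1, h2⟩ := hh
          rw [h1] at him
          have := (Fin.lt_def).mp him
          omega), add_zero]
    · intro i
      show (if i = i then (1:F) else 0) + _ = 1
      rw [if_pos rfl, if_neg (fun hh => by obtain ⟨h1, h2⟩ := hh; rw [h1] at h2; omega),
        add_zero]
  set A2 := L * A1 with hA2def
  have hA2 : ∀ i m : Fin n, A2 i m = A1 i m +
      (if (i : ℕ) < (i₀ : ℕ) then (-(A1 i j₀) / piv) * A1 i₀ m else 0) := by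
    intro i m
    rw [hA2def, Matrix.mul_apply]
    have : ∀ x : Fin n, L i x * A1 x m =
        (if i = x then A1 x m else 0) +
        (if x = i₀ ∧ (i : ℕ) < (i₀ : ℕ) then (-(A1 i j₀) / piv) * A1 x m else 0) := by
      intro x
      show ((if i = x then (1:F) else 0) + _) * A1 x m = _
      rw [add_mul]
      congr 1
      · by_cases hx : i = x
        · rw [if_pos hx, if_pos hx, one_mul]
        · rw [if_neg hx, if_neg hx, zero_mul]
      · by_cases hx : x = i₀ ∧ (i : ℕ) < (i₀ : ℕ)
        · rw [if_pos hx, if_pos hx]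
        · rw [if_neg hx, if_neg hx, zero_mul]
    rw [Finset.sum_congr rfl (fun x _ => this x), Finset.sum_add_distrib]
    congr 1
    · rw [Finset.sum_eq_single i
        (fun x _ hx => if_neg (fun hh => hx hh.symm))
        (fun h => (h (Finset.mem_univ i)).elim), if_pos rfl]
    · by_cases hi : (i : ℕ) < (i₀ : ℕ)
      · rw [if_pos hi, Finset.sum_eq_single i₀
          (fun x _ hx => if_neg (fun hh => hx hh.1))
          (fun h => (h (Finset.mem_univ i₀)).elim), if_pos ⟨rfl, hi⟩]
      · rw [if_neg hi]
        exact Finset.sum_eq_zero (fun x _ => if_neg (fun hh => hi hh.2))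
  -- facts about A2
  have hA2off : ∀ i m : Fin n, m ≠ j₀ → A2 i m = A1 i m := by
    intro i m hm
    rw [hA2 i m]
    by_cases hi : (i : ℕ) < (i₀ : ℕ)
    · rw [if_pos hi, hA1row m hm, mul_zero, add_zero]
    · rw [if_neg hi, add_zero]
  have hA2colj₀ : ∀ i : Fin n, (A2 i j₀ ≠ 0 ↔ i = i₀) := by
    intro i
    rcases lt_trichotomy (i : ℕ) (i₀ : ℕ) with hlt | heq | hgt
    · rw [hA2 i j₀, if_pos hlt, hA1colj₀ i₀]
      have : A1 i j₀ + -A1 i j₀ / piv * A i₀ j₀ = 0 := by field_simp; rw [hpivdef]; ring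
      rw [this]
      simp only [ne_eq, not_true_eq_false, false_iff]
      intro hh; rw [hh] at hlt; omega
    · have hieq : i = i₀ := Fin.ext heq
      have hp : A i₀ j₀ ≠ 0 := hpiv
      rw [hA2 i j₀, if_neg (by omega), add_zero, hA1colj₀]
      simp [hieq, hp]
    · rw [hA2 i j₀, if_neg (by omega), add_zero, hA1colj₀]
      constructor
      · intro hh
        exact absurd (hmax i hh) (by rw [Fin.le_def]; omega)
      · intro hh; rw [hh] at hgt; omega
  have hLAR : L * A * R = A2 := by rw [hA2def, hA1def, mul_assoc]
  have hval : ∀ i m : Fin n, (L * A * R) i m = A2 i m := fun i m => by rw [hLAR]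
  refine ⟨L, R, Function.update f j₀ i₀, hLU, hRU, ?_, ?_, ?_⟩
  · -- columns
    intro j hj i
    rcases Nat.lt_or_ge (j : ℕ) k with hjk | hjk
    · have hjne : j ≠ j₀ := fun hh => by have := congrArg Fin.val hh; omega
      rw [Function.update_of_ne hjne, hval i j, hA2off i j hjne, hA1le i j (by omega)]
      exact hInv.1 j hjk i
    · have hjj : j = j₀ := Fin.ext (by omega)
      rw [hjj, Function.update_self, hval i j₀]
      exact hA2colj₀ i
  · -- rows
    intro j hj m hm
    rcases Nat.lt_or_ge (j : ℕ) k with hjk | hjk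
    · have hjne : j ≠ j₀ := fun hh => by have := congrArg Fin.val hh; omega
      rw [Function.update_of_ne hjne, hval (f j) m]
      by_cases hmj₀ : m = j₀
      · rw [hmj₀]
        by_contra hc
        exact hnotpiv j hjk ((hA2colj₀ (f j)).mp hc)
      · rw [hA2off (f j) m hmj₀, hA1pivrow j hjk m]
        exact hInv.2.1 j hjk m hm
    · have hjj : j = j₀ := Fin.ext (by omega)
      have hm' : m ≠ j₀ := by rw [← hjj]; exact hm
      rw [hjj, Function.update_self, hval i₀ m, hA2off i₀ m hm', hA1row m hm']
  · -- injectivity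
    intro j j' hj hj' hff
    rcases Nat.lt_or_ge (j : ℕ) k with hjk | hjk <;>
      rcases Nat.lt_or_ge (j' : ℕ) k with hjk' | hjk'
    · rw [Function.update_of_ne (fun hh => by have := congrArg Fin.val hh; omega),
        Function.update_of_ne (fun hh => by have := congrArg Fin.val hh; omega)] at hff
      exact hInv.2.2 j j' hjk hjk' hff
    · have hjj : j' = j₀ := Fin.ext (by omega)
      have hne : j ≠ j₀ := fun hh => by have := congrArg Fin.val hh; omega
      rw [hjj, Function.update_self, Function.update_of_ne hne] at hff
      exact absurd hff (hnotpiv j hjk)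
    · have hjj : j = j₀ := Fin.ext (by omega)
      have hne : j' ≠ j₀ := fun hh => by have := congrArg Fin.val hh; omega
      rw [hjj, Function.update_self, Function.update_of_ne hne] at hff
      exact absurd hff.symm (hnotpiv j' hjk')
    · exact Fin.ext (by omega)

lemma bruhat_reduce : ∀ (d k : ℕ), k + d = n → ∀ (A : Matrix (Fin n) (Fin n) F)
    (f : Fin n → Fin n), IsUnit A → Inv k f A →
    ∃ (L R : Matrix (Fin n) (Fin n) F) (f' : Fin n → Fin n),
      IsUU L ∧ IsUU R ∧ Inv n f' (L * A * R) := by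
  intro d
  induction d with
  | zero =>
    intro k hk A f _ hInv
    refine ⟨1, 1, f, isUU_one, isUU_one, ?_⟩
    rw [one_mul, mul_one]
    rw [Nat.add_zero] at hk
    exact hk ▸ hInv
  | succ d IH =>
    intro k hk A f hA hInv
    have hkn : k < n := by omega
    obtain ⟨L₁, R₁, f₁, hL₁, hR₁, hInv₁⟩ := bruhat_step hkn hA hInv
    have hA₁ : IsUnit (L₁ * A * R₁) :=
      ((isUnit_of_isUU hL₁).mul hA).mul (isUnit_of_isUU hR₁)
    obtain ⟨L₂, R₂, f₂, hL₂, hR₂, hInv₂⟩ := IH (k + 1) (by omega) (L₁ * A * R₁) f₁ hA₁ hInv₁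
    refine ⟨L₂ * L₁, R₁ * R₂, f₂, isUU_mul hL₂ hL₁, isUU_mul hR₁ hR₂, ?_⟩
    have : L₂ * L₁ * A * (R₁ * R₂) = L₂ * (L₁ * A * R₁) * R₂ := by
      simp only [mul_assoc]
    rw [this]
    exact hInv₂

theorem bruhat (g : GL (Fin n) F) :
    ∃ u₁ m u₂ : GL (Fin n) F, IsUU u₁.val ∧ IsUU u₂.val ∧ IsMonomialMat m.val ∧
      g = u₁ * m * u₂ := by
  have hA : IsUnit g.val := ⟨g, rfl⟩
  have hInv0 : Inv 0 id g.val := ⟨fun j hj => by omega, fun j hj => by omega,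
    fun j j' hj => by omega⟩
  obtain ⟨L, R, f', hL, hR, hInv⟩ := bruhat_reduce n 0 (by omega) g.val id hA hInv0
  have hLunit : IsUnit L := isUnit_of_isUU hL
  have hRunit : IsUnit R := isUnit_of_isUU hR
  set uL : GL (Fin n) F := hLunit.unit with huL
  set uR : GL (Fin n) F := hRunit.unit with huR
  have huLval : uL.val = L := rfl
  have huRval : uR.val = R := rfl
  refine ⟨uL⁻¹, uL * g * uR, uR⁻¹, ?_, ?_, ?_, ?_⟩
  · exact isUU_inv uL (by rw [huLval]; exact hL)
  · exact isUU_inv uR (by rw [huRval]; exact hR)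
  · have : (uL * g * uR).val = L * g.val * R := by
      rw [Units.val_mul, Units.val_mul, huLval, huRval]
    rw [this]
    exact inv_n_monomial hInv
  · group

end GG
namespace GG

variable {F : Type} [Field F] [Fintype F] [DecidableEq F] {n : ℕ}

lemma monomial_data {M : Matrix (Fin n) (Fin n) F} (hm : IsMonomialMat M) :
    ∃ w : Fin n → Fin n, (∀ i j : Fin n, M i j ≠ 0 ↔ i = w j) ∧ Function.Injective w := by
  classical
  choose w hw1 hw2 using hm.2
  refine ⟨w, fun i j => ⟨fun h => (hw2 j i h).symm ▸ rfl, fun h => h ▸ hw1 j⟩, ?_⟩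
  · intro j j' hjj
    obtain ⟨l, hl, hlu⟩ := hm.1 (w j)
    have e1 : j = l := hlu j (hw1 j)
    have e2 : j' = l := hlu j' (by rw [hjj]; exact hw1 j')
    rw [e1, e2]

/-- elementary unipotent element of GL -/
def elemU (i j : Fin n) (hij : j ≠ i) (t : F) : GL (Fin n) F where
  val := 1 + Matrix.single i j t
  inv := 1 + Matrix.single i j (-t)
  val_inv := by
    have hAB : Matrix.single i j t * Matrix.single i j (-t) = 0 :=
      Matrix.single_mul_single_of_ne _ _ _ _ hij _
    have hexp : (1 + Matrix.single i j t) * (1 + Matrix.single i j (-t))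
        = 1 + (Matrix.single i j t + Matrix.single i j (-t))
          + Matrix.single i j t * Matrix.single i j (-t) := by noncomm_ring
    rw [hexp, hAB, add_zero, ← Matrix.single_add, add_neg_cancel,
      Matrix.single_zero, add_zero]
  inv_val := by
    have hAB : Matrix.single i j (-t) * Matrix.single i j t = 0 :=
      Matrix.single_mul_single_of_ne _ _ _ _ hij _
    have hexp : (1 + Matrix.single i j (-t)) * (1 + Matrix.single i j t)
        = 1 + (Matrix.single i j (-t) + Matrix.single i j t)
          + Matrix.single i j (-t) * Matrix.single i j t := by noncomm_ring
    rw [hexp, hAB, add_zero, ← Matrix.single_add, neg_add_cancel,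
      Matrix.single_zero, add_zero]

lemma elemU_val (i j : Fin n) (hij : j ≠ i) (t : F) :
    (elemU i j hij t).val = 1 + Matrix.single i j t := rfl

lemma std_apply (i j a b : Fin n) (t : F) :
    Matrix.single i j t a b = if i = a ∧ j = b then t else 0 := by
  by_cases h : i = a ∧ j = b
  · obtain ⟨h1, h2⟩ := h
    subst h1; subst h2
    rw [if_pos ⟨rfl, rfl⟩]
    exact Matrix.single_apply_same i j t
  · rw [if_neg h]
    exact Matrix.single_apply_of_ne i j t a b h

lemma isUU_elemU {i j : Fin n} (hij : i < j) (t : F) :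
    IsUU ((elemU i j (ne_of_gt hij)) t).val := by
  rw [elemU_val]
  constructor
  · intro a b hab
    show (1 : Matrix (Fin n) (Fin n) F) a b + Matrix.single i j t a b = 0
    rw [Matrix.one_apply_ne (fun hh => by subst hh; exact lt_irrefl _ hab), std_apply,
      if_neg (by rintro ⟨h1, h2⟩; subst h1; subst h2; exact absurd hab (not_lt_of_gt hij)),
      add_zero]
  · intro a
    show (1 : Matrix (Fin n) (Fin n) F) a a + Matrix.single i j t a a = 1
    rw [Matrix.one_apply_eq, std_apply,
      if_neg (by rintro ⟨h1, h2⟩; subst h1; rw [h2] at hij; exact absurd hij (lt_irrefl _)),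
      add_zero]

lemma sd_add (M N : Matrix (Fin n) (Fin n) F) : sd (M + N) = sd M + sd N := by
  unfold sd
  rw [← Finset.sum_add_distrib]
  refine Finset.sum_congr rfl fun p _ => ?_
  by_cases h : (p.1 : ℕ) + 1 = (p.2 : ℕ)
  · rw [if_pos h, if_pos h, if_pos h]; rfl
  · rw [if_neg h, if_neg h, if_neg h, add_zero]

lemma sd_std (i j : Fin n) (t : F) :
    sd (Matrix.single i j t) = if (i : ℕ) + 1 = (j : ℕ) then t else 0 := by
  unfold sd
  by_cases hij : (i : ℕ) + 1 = (j : ℕ)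
  · rw [if_pos hij, Finset.sum_eq_single (i, j)]
    · rw [if_pos hij, Matrix.single_apply_same]
    · intro p _ hp
      by_cases h : (p.1 : ℕ) + 1 = (p.2 : ℕ)
      · rw [if_pos h, std_apply, if_neg ?_]
        rintro ⟨h1, h2⟩
        exact hp (Prod.ext h1.symm h2.symm)
      · rw [if_neg h]
    · intro h; exact absurd (Finset.mem_univ _) h
  · rw [if_neg hij]
    refine Finset.sum_eq_zero fun p _ => ?_
    by_cases h : (p.1 : ℕ) + 1 = (p.2 : ℕ)
    · rw [if_pos h, std_apply, if_neg ?_]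
      rintro ⟨h1, h2⟩
      rw [← h1, ← h2] at h
      exact hij h
    · rw [if_neg h]

lemma sd_elemU (i j : Fin n) (hij : j ≠ i) (t : F) :
    sd ((elemU i j hij t).val) = if (i : ℕ) + 1 = (j : ℕ) then t else 0 := by
  rw [elemU_val, sd_add, sd_one, sd_std, zero_add]

variable (ψ : AddChar F ℂ)

/-- the key cancellation: if `e m e ≠ 0` then `ψ` is invariant along `v m = m u`. -/
lemma psi_cond {m u v : GL (Fin n) F}
    (hme : eMu ψ n [n] * MonoidAlgebra.single m 1 * eMu ψ n [n] ≠ 0)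
    (hu : u ∈ Uset F n) (hv : v ∈ Uset F n) (hcomm : v * m = m * u) :
    psiMu ψ n [n] v = psiMu ψ n [n] u := by
  set e := eMu ψ n [n] with he
  set X := e * MonoidAlgebra.single m 1 * e with hX
  have hA : e * MonoidAlgebra.single (v * m) 1 * e = psiMu ψ n [n] v • X := by
    have h1 : MonoidAlgebra.single (v * m) (1 : ℂ)
        = MonoidAlgebra.single v 1 * MonoidAlgebra.single m 1 := by
      rw [MonoidAlgebra.single_mul_single, one_mul]
    rw [h1, ← mul_assoc, e_mul_single ψ hv, hX, smul_mul_assoc, smul_mul_assoc, mul_assoc]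
  have hB : e * MonoidAlgebra.single (v * m) 1 * e = psiMu ψ n [n] u • X := by
    rw [hcomm]
    have h1 : MonoidAlgebra.single (m * u) (1 : ℂ)
        = MonoidAlgebra.single m 1 * MonoidAlgebra.single u 1 := by
      rw [MonoidAlgebra.single_mul_single, one_mul]
    rw [h1, mul_assoc, mul_assoc, single_mul_e ψ hu, hX, mul_smul_comm, mul_smul_comm,
      mul_assoc]
  by_contra hne
  apply hme
  have hsub : (psiMu ψ n [n] v - psiMu ψ n [n] u) • X = 0 := by
    rw [sub_smul, ← hA, ← hB, sub_self]
  have hd : psiMu ψ n [n] v - psiMu ψ n [n] u ≠ 0 := sub_ne_zero_of_ne hne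
  have : X = 0 := by
    have := congrArg (fun y => (psiMu ψ n [n] v - psiMu ψ n [n] u)⁻¹ • y) hsub
    simpa [smul_smul, inv_mul_cancel₀ hd] using this
  exact this

end GG
namespace GG

variable {F : Type} [Field F] [Fintype F] [DecidableEq F] {n : ℕ}

lemma claimC {w : Fin n → Fin n}
    (hstep : ∀ (i : ℕ) (h : i + 1 < n),
      (w ⟨i + 1, h⟩ : ℕ) ≤ (w ⟨i, by omega⟩ : ℕ) + 1) :
    ∀ (d : ℕ) (i k : Fin n), (k : ℕ) = (i : ℕ) + d → (w k : ℕ) ≤ (w i : ℕ) + d := by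
  intro d
  induction d with
  | zero =>
    intro i k hk
    have : k = i := Fin.ext (by omega)
    rw [this]
    omega
  | succ d IH =>
    intro i k hk
    have hlt : (i : ℕ) + d + 1 < n := by have := k.isLt; omega
    set k' : Fin n := ⟨(i : ℕ) + d, by omega⟩ with hk'
    have hk2 : k = ⟨(i : ℕ) + d + 1, hlt⟩ := Fin.ext (by simp; omega)
    have h1 : (w k : ℕ) ≤ (w k' : ℕ) + 1 := by
      rw [hk2]
      exact hstep ((i : ℕ) + d) hlt
    have h2 : (w k' : ℕ) ≤ (w i : ℕ) + d := IH i k' rfl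
    omega

lemma window {w : Fin n → Fin n} (hinj : Function.Injective w) {c : Fin n → F}
    (hstep : ∀ (i : ℕ) (h : i + 1 < n),
      (w ⟨i + 1, h⟩ : ℕ) ≤ (w ⟨i, by omega⟩ : ℕ) + 1 ∧
      ((w ⟨i + 1, h⟩ : ℕ) = (w ⟨i, by omega⟩ : ℕ) + 1 → c ⟨i + 1, h⟩ = c ⟨i, by omega⟩)) :
    ∀ (s a : ℕ), a + s = n →
      (∀ q : Fin n, a ≤ (q : ℕ) ↔ (w q : ℕ) < n - a) →
      ∀ q : Fin n, a ≤ (q : ℕ) →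
        (w ((w q).rev) : ℕ) = n - 1 - (q : ℕ) ∧ c ((w q).rev) = c q := by
  have hbij : Function.Bijective w := Finite.injective_iff_bijective.mp hinj
  have hC := claimC (fun i h => (hstep i h).1)
  intro s
  induction s using Nat.strong_induction_on with
  | _ s IH =>
    intro a ha hwin q hq
    have hqn := q.isLt
    have han : a < n := by omega
    obtain ⟨p, hp⟩ := hbij.2 ⟨n - a - 1, by omega⟩
    have hpv : (w p : ℕ) = n - a - 1 := by rw [hp]
    have hpn := p.isLt
    have hpa : a ≤ (p : ℕ) := (hwin p).mpr (by omega)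
    have block : ∀ (d : ℕ) (i : Fin n), (i : ℕ) + d = (p : ℕ) → a ≤ (i : ℕ) →
        (w i : ℕ) = n - a - 1 - d := by
      intro d
      induction d using Nat.strong_induction_on with
      | _ d IHd =>
        intro i hid hia
        have hub : (w p : ℕ) ≤ (w i : ℕ) + d := hC d i p (by omega)
        have hwin_i : (w i : ℕ) < n - a := (hwin i).mp hia
        by_contra hne
        have hgt : n - a - 1 - d < (w i : ℕ) := by omega
        set d' : ℕ := n - a - 1 - (w i : ℕ) with hd'
        have hd'lt : d' < d := by omega
        set i' : Fin n := ⟨(p : ℕ) - d', by omega⟩ with hi'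
        have hi'v : (i' : ℕ) = (p : ℕ) - d' := rfl
        have hblk := IHd d' hd'lt i' (by omega) (by omega)
        have heq : w i' = w i := Fin.ext (by omega)
        have hieq := congrArg Fin.val (hinj heq)
        rw [hi'v] at hieq
        omega
    have cblock : ∀ (d : ℕ) (i : Fin n), (i : ℕ) + d = (p : ℕ) → a ≤ (i : ℕ) →
        c i = c p := by
      intro d
      induction d with
      | zero =>
        intro i hid _
        have : i = p := Fin.ext (by omega)
        rw [this]
      | succ d IHd =>
        intro i hid hia
        have hlt : (i : ℕ) + 1 < n := by omega
        set i' : Fin n := ⟨(i : ℕ) + 1, hlt⟩ with hi'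
        have hi'v : (i' : ℕ) = (i : ℕ) + 1 := rfl
        have hwi : (w i : ℕ) = n - a - 1 - (d + 1) := block (d + 1) i hid hia
        have hwi' : (w i' : ℕ) = n - a - 1 - d := block d i' (by omega) (by omega)
        have hasc : (w i' : ℕ) = (w i : ℕ) + 1 := by omega
        have hceq : c i' = c i := (hstep (i : ℕ) hlt).2 hasc
        rw [← hceq]
        exact IHd i' (by omega) (by omega)
    rcases le_or_gt (q : ℕ) (p : ℕ) with hqp | hqp
    · have hwq : (w q : ℕ) = n - a - 1 - ((p : ℕ) - (q : ℕ)) :=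
        block ((p : ℕ) - (q : ℕ)) q (by omega) hq
      set r : Fin n := (w q).rev with hr
      have hrv : (r : ℕ) = n - ((w q : ℕ) + 1) := Fin.val_rev (w q)
      have hra : a ≤ (r : ℕ) := by omega
      have hrp : (r : ℕ) + ((q : ℕ) - a) = (p : ℕ) := by omega
      constructor
      · rw [block ((q : ℕ) - a) r hrp hra]; omega
      · rw [cblock ((q : ℕ) - a) r hrp hra, cblock ((p : ℕ) - (q : ℕ)) q (by omega) hq]
    · have hwin' : ∀ q' : Fin n, (p : ℕ) + 1 ≤ (q' : ℕ) ↔ (w q' : ℕ) < n - ((p : ℕ) + 1) := by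
        intro q'
        constructor
        · intro hq'
          have hq'a : a ≤ (q' : ℕ) := by omega
          have h1 : (w q' : ℕ) < n - a := (hwin q').mp hq'a
          by_contra hc
          push_neg at hc
          set d : ℕ := n - a - 1 - (w q' : ℕ) with hd
          have hdle : d ≤ (p : ℕ) - a := by omega
          set i' : Fin n := ⟨(p : ℕ) - d, by omega⟩ with hi'
          have hi'v : (i' : ℕ) = (p : ℕ) - d := rfl
          have hblk := block d i' (by omega) (by omega)
          have heq : w i' = w q' := Fin.ext (by omega)
          have hieq := congrArg Fin.val (hinj heq)
          rw [hi'v] at hieq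
          omega
        · intro hc
          have hq'a : a ≤ (q' : ℕ) := (hwin q').mpr (by omega)
          by_contra hq'
          push_neg at hq'
          have hq'p : (q' : ℕ) ≤ (p : ℕ) := by omega
          have := block ((p : ℕ) - (q' : ℕ)) q' (by omega) hq'a
          omega
      exact IH (n - ((p : ℕ) + 1)) (by omega) ((p : ℕ) + 1) (by omega) hwin' q (by omega)

variable (ψ : AddChar F ℂ)

lemma addchar_ne_zero (x : F) : ψ x ≠ 0 := by
  intro h
  have : ψ x * ψ (-x) = 1 := by
    rw [← AddChar.map_add_eq_mul, add_neg_cancel, AddChar.map_zero_eq_one]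
  rw [h, zero_mul] at this
  exact zero_ne_one this

lemma key_structure (hψ : ψ ≠ 1) {m : GL (Fin n) F}
    (hmono : IsMonomialMat (m.val))
    (hme : eMu ψ n [n] * MonoidAlgebra.single m 1 * eMu ψ n [n] ≠ 0) :
    sigG m = m := by
  obtain ⟨w, hw, hinj⟩ := monomial_data hmono
  set c : Fin n → F := fun j => m.val (w j) j with hc
  have hcne : ∀ j, c j ≠ 0 := fun j => (hw (w j) j).mpr rfl
  have hstep : ∀ (i : ℕ) (h : i + 1 < n),
      (w ⟨i + 1, h⟩ : ℕ) ≤ (w ⟨i, by omega⟩ : ℕ) + 1 ∧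
      ((w ⟨i + 1, h⟩ : ℕ) = (w ⟨i, by omega⟩ : ℕ) + 1 → c ⟨i + 1, h⟩ = c ⟨i, by omega⟩) := by
    intro i h
    set I : Fin n := ⟨i, by omega⟩ with hI
    set I' : Fin n := ⟨i + 1, h⟩ with hI'
    have hIv : (I : ℕ) = i := rfl
    have hI'v : (I' : ℕ) = i + 1 := rfl
    have hne : I ≠ I' := fun hh => by have := congrArg Fin.val hh; omega
    have hwne : w I ≠ w I' := fun hh => hne (hinj hh)
    have hwnev : (w I : ℕ) ≠ (w I' : ℕ) := fun hh => hwne (Fin.ext hh)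
    by_cases hlt : (w I : ℕ) < (w I' : ℕ)
    · have hrel : ∀ t : F,
          ψ (if (w I : ℕ) + 1 = (w I' : ℕ) then t * c I / c I' else 0) = ψ t := by
        intro t
        set s : F := t * c I / c I' with hs
        have hII' : I < I' := by rw [Fin.lt_def]; omega
        have hwlt : w I < w I' := by rw [Fin.lt_def]; exact hlt
        set u := elemU I I' (ne_of_gt hII') t with hudef
        set v := elemU (w I) (w I') (ne_of_gt hwlt) s with hvdef
        have hu : u ∈ Uset F n := mem_Uset.mpr (isUU_elemU hII' t)
        have hv : v ∈ Uset F n := mem_Uset.mpr (isUU_elemU hwlt s)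
        have hcomm : v * m = m * u := by
          apply Units.ext
          show v.val * m.val = m.val * u.val
          rw [hudef, hvdef, elemU_val, elemU_val, add_mul, mul_add, one_mul, mul_one]
          congr 1
          ext a b
          by_cases hab : a = w I
          · subst hab
            rw [Matrix.single_mul_apply_same]
            by_cases hb : b = I'
            · subst hb
              rw [Matrix.mul_single_apply_same]
              have e1 : m.val (w I') I' = c I' := rfl
              have e2 : m.val (w I) I = c I := rfl
              rw [e1, e2, hs, div_mul_cancel₀ _ (hcne I'), mul_comm]
            · have h0 : m.val (w I') b = 0 := by
                by_contra hx
                exact hb (hinj ((hw _ _).mp hx)).symm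
              rw [h0, mul_zero, Matrix.mul_single_apply_of_ne _ _ _ _ _ hb]
          · rw [Matrix.single_mul_apply_of_ne _ _ _ _ _ hab]
            by_cases hb : b = I'
            · subst hb
              rw [Matrix.mul_single_apply_same]
              have h0 : m.val a I = 0 := by
                by_contra hx
                exact hab ((hw _ _).mp hx)
              rw [h0, zero_mul]
            · rw [Matrix.mul_single_apply_of_ne _ _ _ _ _ hb]
        have hpc := psi_cond ψ hme hu hv hcomm
        rw [psiMu_eq, psiMu_eq, hudef, hvdef, sd_elemU, sd_elemU,
          if_pos (show (I : ℕ) + 1 = (I' : ℕ) from rfl)] at hpc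
        exact hpc
      constructor
      · by_contra hgt
        push_neg at hgt
        have hnadj : ¬((w I : ℕ) + 1 = (w I' : ℕ)) := by omega
        have hall : ∀ t : F, ψ t = 1 := by
          intro t
          have := hrel t
          rw [if_neg hnadj, AddChar.map_zero_eq_one] at this
          exact this.symm
        apply hψ
        ext t
        rw [hall t, AddChar.one_apply]
      · intro hasc
        have hadj : (w I : ℕ) + 1 = (w I' : ℕ) := hasc.symm
        have hr : ∀ t : F, ψ (t * (c I / c I')) = ψ t := fun t => by
          have := hrel t
          rw [if_pos hadj] at this
          rw [mul_div_assoc] at this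
          exact this
        have hone : c I / c I' = 1 := by
          by_contra hne1
          have hψ1 : ∀ aF : F, ψ aF = 1 := by
            intro aF
            have hd : c I / c I' - 1 ≠ 0 := sub_ne_zero_of_ne hne1
            set t : F := aF / (c I / c I' - 1) with ht
            have h1 : ψ (t * (c I / c I')) = ψ t := hr t
            have h2 : t * (c I / c I') = t + t * (c I / c I' - 1) := by ring
            rw [h2, AddChar.map_add_eq_mul] at h1
            have h3 : ψ (t * (c I / c I' - 1)) = 1 :=
              mul_left_cancel₀ (addchar_ne_zero ψ t) (by rw [h1, mul_one])
            have h4 : t * (c I / c I' - 1) = aF := by rw [ht]; field_simp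
            rw [h4] at h3
            exact h3
          apply hψ
          ext x
          rw [hψ1 x, AddChar.one_apply]
        exact ((div_eq_one_iff_eq (hcne I')).mp hone).symm
    · constructor
      · omega
      · intro hasc; omega
  have hcomb := window hinj hstep n 0 (by omega)
    (fun q => ⟨fun _ => by have := (w q).isLt; omega, fun _ => Nat.zero_le _⟩)
  apply Units.ext
  show sigM m.val = m.val
  ext a b
  rw [sigM_apply]
  by_cases hab : a = w b
  · obtain ⟨h1, h2⟩ := hcomb b (Nat.zero_le _)
    have hbrv : (b.rev : ℕ) = n - ((b : ℕ) + 1) := Fin.val_rev b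
    have hbn := b.isLt
    have hr : w ((w b).rev) = b.rev := Fin.ext (by omega)
    have e0 : m.val b.rev a.rev = m.val b.rev ((w b).rev) := by rw [hab]
    have hent : m.val b.rev ((w b).rev) = c ((w b).rev) := by
      conv_lhs => rw [← hr]
    rw [e0, hent, h2, hab]
  · have h1 : m.val a b = 0 := by
      by_contra hx
      exact hab ((hw a b).mp hx)
    rw [h1]
    by_contra hx
    have h2 : b.rev = w a.rev := (hw _ _).mp hx
    obtain ⟨h3, _⟩ := hcomb a.rev (Nat.zero_le _)
    have harv : (a.rev : ℕ) = n - ((a : ℕ) + 1) := Fin.val_rev a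
    have han := a.isLt
    have h4 : w ((w a.rev).rev) = a := Fin.ext (by omega)
    have h5 : (w a.rev).rev = b := by rw [← h2, Fin.rev_rev]
    rw [h5] at h4
    exact hab h4.symm

end GG
namespace GG

variable {F : Type} [Field F] [Fintype F] [DecidableEq F] {n : ℕ} (ψ : AddChar F ℂ)

lemma SigA_ege (hψ : ψ ≠ 1) (g : GL (Fin n) F) :
    SigA (eMu ψ n [n] * MonoidAlgebra.single g 1 * eMu ψ n [n])
      = eMu ψ n [n] * MonoidAlgebra.single g 1 * eMu ψ n [n] := by
  set e := eMu ψ n [n] with he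
  obtain ⟨u₁, m, u₂, hu₁, hu₂, hm, hg⟩ := bruhat g
  have hu₁' : u₁ ∈ Uset F n := mem_Uset.mpr hu₁
  have hu₂' : u₂ ∈ Uset F n := mem_Uset.mpr hu₂
  have hdecomp : e * MonoidAlgebra.single g 1 * e
      = psiMu ψ n [n] u₁ • (psiMu ψ n [n] u₂ • (e * MonoidAlgebra.single m 1 * e)) := by
    rw [hg]
    have h1 : MonoidAlgebra.single (u₁ * m * u₂) (1 : ℂ)
        = MonoidAlgebra.single u₁ 1 * MonoidAlgebra.single m 1 * MonoidAlgebra.single u₂ 1 := by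
      rw [MonoidAlgebra.single_mul_single, MonoidAlgebra.single_mul_single, mul_one, mul_one]
    rw [h1]
    have h2 : e * (MonoidAlgebra.single u₁ 1 * MonoidAlgebra.single m 1 *
        MonoidAlgebra.single u₂ 1) * e
        = (e * MonoidAlgebra.single u₁ 1) * MonoidAlgebra.single m 1 *
          (MonoidAlgebra.single u₂ 1 * e) := by noncomm_ring
    rw [h2, e_mul_single ψ hu₁', single_mul_e ψ hu₂', smul_mul_assoc, smul_mul_assoc,
      mul_smul_comm, mul_assoc]
  by_cases hX : e * MonoidAlgebra.single m 1 * e = 0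
  · rw [hdecomp, hX, smul_zero, smul_zero]
    exact SigA_zero
  · have hsig : sigG m = m := key_structure ψ hψ hm hX
    have hXfix : SigA (e * MonoidAlgebra.single m 1 * e)
        = e * MonoidAlgebra.single m 1 * e := by
      rw [SigA_mul, SigA_mul, SigA_e, SigA_single, hsig, mul_assoc]
    rw [hdecomp, SigA_smul, SigA_smul, hXfix]

lemma SigA_eae (hψ : ψ ≠ 1) (a : MonoidAlgebra ℂ (GL (Fin n) F)) :
    SigA (eMu ψ n [n] * a * eMu ψ n [n]) = eMu ψ n [n] * a * eMu ψ n [n] := by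
  induction a using MonoidAlgebra.induction_linear with
  | zero => rw [mul_zero, zero_mul]; exact SigA_zero
  | add f g hf hg => rw [mul_add, add_mul, SigA_add, hf, hg]
  | single g b =>
    have h1 : MonoidAlgebra.single g b = b • MonoidAlgebra.single g (1 : ℂ) := by
      rw [MonoidAlgebra.smul_single, smul_eq_mul, mul_one]
    rw [h1, mul_smul_comm, smul_mul_assoc, SigA_smul, SigA_ege ψ hψ g]

lemma ee_comm (hψ : ψ ≠ 1) (a b : MonoidAlgebra ℂ (GL (Fin n) F)) :
    (eMu ψ n [n] * a * eMu ψ n [n]) * (eMu ψ n [n] * b * eMu ψ n [n])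
      = (eMu ψ n [n] * b * eMu ψ n [n]) * (eMu ψ n [n] * a * eMu ψ n [n]) := by
  set e := eMu ψ n [n] with he
  have key : SigA ((e * a * e) * (e * b * e)) = (e * a * e) * (e * b * e) := by
    have h1 : (e * a * e) * (e * b * e) = e * (a * e * e * b) * e := by noncomm_ring
    rw [h1]
    exact SigA_eae ψ hψ _
  rw [← key, SigA_mul, SigA_eae ψ hψ a, SigA_eae ψ hψ b]

end GG
open GG in
/-- For every irreducible `ℂ[G]`-module `V`, `dim_ℂ(e_{(n)}·V) ≤ 1`:
the Gelfand–Graev representation is multiplicity free. -/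
theorem GelfandGraev_multiplicity_free {F : Type} [Field F] [Fintype F] [DecidableEq F]
    (n : ℕ) (hn : 1 ≤ n) (ψ : AddChar F ℂ) (hψ : ψ ≠ 1)
    (V : Type) [AddCommGroup V] [Module ℂ V]
    [Module (MonoidAlgebra ℂ (GL (Fin n) F)) V]
    [IsScalarTower ℂ (MonoidAlgebra ℂ (GL (Fin n) F)) V]
    (hV : IsSimpleModule (MonoidAlgebra ℂ (GL (Fin n) F)) V) :
    Module.finrank ℂ
      ↥(Submodule.span ℂ {x : V | ∃ v : V, x = eMu ψ n [n] • v}) ≤ 1 := by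
  classical
  set e : MonoidAlgebra ℂ (GL (Fin n) F) := eMu ψ n [n] with he
  set W : Submodule ℂ V := Submodule.span ℂ {x : V | ∃ v : V, x = e • v} with hW
  have hee : e * e = e := e_idem ψ
  have smulc : ∀ (cc : ℂ) (aa : MonoidAlgebra ℂ (GL (Fin n) F)) (v : V),
      aa • (cc • v) = cc • (aa • v) := by
    intro cc aa v
    have h1 : cc • v = (cc • (1 : MonoidAlgebra ℂ (GL (Fin n) F))) • v := by
      rw [smul_assoc, one_smul]
    rw [h1, ← mul_smul, mul_smul_comm, mul_one, smul_assoc]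
  have memW : ∀ v : V, e • v ∈ W := fun v => Submodule.subset_span ⟨v, rfl⟩
  have hWform : ∀ x ∈ W, ∃ v : V, x = e • v := by
    intro x hx
    refine Submodule.span_induction ?_ ?_ ?_ ?_ hx
    · intro y hy; exact hy
    · exact ⟨0, (smul_zero e).symm⟩
    · rintro y z _ _ ⟨vy, rfl⟩ ⟨vz, rfl⟩
      exact ⟨vy + vz, (smul_add e vy vz).symm⟩
    · rintro cc y _ ⟨vy, rfl⟩
      exact ⟨cc • vy, (smulc cc e vy).symm⟩
  have hfix : ∀ x ∈ W, e • x = x := by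
    intro x hx
    obtain ⟨v, rfl⟩ := hWform x hx
    rw [← mul_smul, hee]
  have hnt : Nontrivial V := IsSimpleModule.nontrivial (MonoidAlgebra ℂ (GL (Fin n) F)) V
  have hspan : ∀ (x : V), x ≠ 0 → ∀ v : V,
      ∃ aa : MonoidAlgebra ℂ (GL (Fin n) F), aa • x = v := by
    intro x hx v
    have htop : Submodule.span (MonoidAlgebra ℂ (GL (Fin n) F)) {x} = ⊤ := by
      rcases hV.eq_bot_or_eq_top (Submodule.span (MonoidAlgebra ℂ (GL (Fin n) F)) {x})
        with hb | ht
      · exfalso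
        have hxmem : x ∈ Submodule.span (MonoidAlgebra ℂ (GL (Fin n) F)) {x} :=
          Submodule.mem_span_singleton_self x
        rw [hb] at hxmem
        exact hx ((Submodule.mem_bot _).mp hxmem)
      · exact ht
    have hv : v ∈ Submodule.span (MonoidAlgebra ℂ (GL (Fin n) F)) {x} := by
      rw [htop]; trivial
    exact Submodule.mem_span_singleton.mp hv
  have hfinA : Module.Finite ℂ (MonoidAlgebra ℂ (GL (Fin n) F)) :=
    Module.Finite.equiv (MonoidAlgebra.coeffLinearEquiv ℂ).symm
  have hfinV : FiniteDimensional ℂ V := by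
    obtain ⟨x₀, hx₀⟩ := exists_ne (0 : V)
    let ℓ : MonoidAlgebra ℂ (GL (Fin n) F) →ₗ[ℂ] V :=
      { toFun := fun aa => aa • x₀
        map_add' := fun a b => add_smul a b x₀
        map_smul' := fun cc aa => by simp [smul_assoc] }
    have hsurj : Function.Surjective ℓ := by
      intro v
      obtain ⟨aa, ha⟩ := hspan x₀ hx₀ v
      exact ⟨aa, ha⟩
    exact Module.Finite.of_surjective ℓ hsurj
  by_cases hWbot : W = ⊥
  · rw [hWbot, finrank_bot]
    exact Nat.zero_le 1
  · obtain ⟨x, hxW, hx0⟩ := (Submodule.ne_bot_iff W).mp hWbot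
    have claim2 : ∀ y ∈ W, ∃ cc : ℂ, y = cc • x := by
      intro y hy
      obtain ⟨vy, hvy⟩ := hWform y hy
      obtain ⟨aa, haa⟩ := hspan x hx0 vy
      have hy2 : y = (e * aa * e) • x := by
        rw [hvy, ← haa, mul_smul, hfix x hxW, mul_smul]
      let φ : W →ₗ[ℂ] W :=
        { toFun := fun z => ⟨(e * aa * e) • (z : V), by
            have h : (e * aa * e) • (z : V) = e • ((aa * e) • (z : V)) := by
              rw [mul_assoc, mul_smul]
            rw [h]; exact memW _⟩
          map_add' := fun z₁ z₂ => Subtype.ext (by simp [smul_add])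
          map_smul' := fun cc z => Subtype.ext (by simp [smulc]) }
      have hntW : Nontrivial W :=
        ⟨⟨⟨x, hxW⟩, 0, fun hh => hx0 (by simpa using congrArg Subtype.val hh)⟩⟩
      obtain ⟨μ, hμ⟩ := Module.End.exists_eigenvalue φ
      obtain ⟨z, hz⟩ := hμ.exists_hasEigenvector
      have hzval : (e * aa * e) • (z : V) = μ • (z : V) := by
        have h := Module.End.mem_eigenspace_iff.mp hz.1
        have := congrArg Subtype.val h
        exact this
      have hz0 : (z : V) ≠ 0 := fun hh => hz.2 (Subtype.ext hh)
      have hzW : (z : V) ∈ W := z.2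
      obtain ⟨bb, hbb⟩ := hspan (z : V) hz0 x
      have hkx : (e * bb * e) • (z : V) = x := by
        rw [mul_assoc, mul_smul, mul_smul, hfix _ hzW, hbb, hfix x hxW]
      refine ⟨μ, ?_⟩
      have hcomm := ee_comm ψ hψ aa bb
      calc y = (e * aa * e) • x := hy2
        _ = (e * aa * e) • ((e * bb * e) • (z : V)) := by rw [hkx]
        _ = ((e * aa * e) * (e * bb * e)) • (z : V) := (mul_smul _ _ _).symm
        _ = ((e * bb * e) * (e * aa * e)) • (z : V) := by rw [hcomm]
        _ = (e * bb * e) • ((e * aa * e) • (z : V)) := mul_smul _ _ _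
        _ = (e * bb * e) • (μ • (z : V)) := by rw [hzval]
        _ = μ • ((e * bb * e) • (z : V)) := smulc μ _ _
        _ = μ • x := by rw [hkx]
    have hWle : W ≤ Submodule.span ℂ {x} := by
      rw [hW]
      apply Submodule.span_le.mpr
      intro y hy
      have hyW : y ∈ W := Submodule.subset_span hy
      obtain ⟨cc, hcc⟩ := claim2 y hyW
      exact Submodule.mem_span_singleton.mpr ⟨cc, hcc.symm⟩
    calc Module.finrank ℂ W ≤ Module.finrank ℂ (Submodule.span ℂ {x}) :=
        Submodule.finrank_mono hWle
      _ = 1 := finrank_span_singleton hx0
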